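/- arXiv:1510.03086 — 4 statements merged into one kernel-verified Lean document; each statement's English description precedes it below -/
import Mathlib

section
/- Let A be an associative unital algebra over the field ℚ(v), let F, x, y ∈ A, and suppose that x satisfies the a-th order Serre relation with F and y satisfies the b-th order Serre relation with F (for nonnegative integers a, b). Then the product xy satisfies the (a+b)-th order Serre relation with F, i.e. Σ_{t=0}^{a+b+1} (−1)^{a+b+1−t} F^{(a+b+1−t)} (xy) F^{(t)} = 0. -/
/-- The quantum integer `[n] = (v^n - v^{-n})/(v - v^{-1})` in `ℚ(v)`. -/
noncomputable def qint (n : ℤ) : RatFunc ℚ :=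
  (RatFunc.X ^ n - RatFunc.X ^ (-n)) / (RatFunc.X - RatFunc.X⁻¹)

/-- The quantum factorial `[n]! = [n][n-1]⋯[1]`, with `[0]! = 1`. -/
noncomputable def qfact (n : ℕ) : RatFunc ℚ :=
  ∏ i ∈ Finset.range n, qint (i + 1)

/-- The quantum binomial coefficient `binom(n, k) = [n][n-1]⋯[n-k+1]/[k]!`
for `n : ℤ` and `k : ℕ`. -/
noncomputable def qbinom (n : ℤ) (k : ℕ) : RatFunc ℚ :=
  (∏ i ∈ Finset.range k, qint (n - i)) / qfact k

/-- The `n`-th divided power `F^{(n)} = (1/[n]!) F^n` of an element `F`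
of a `ℚ(v)`-algebra. -/
noncomputable def dpow {A : Type*} [Ring A] [Algebra (RatFunc ℚ) A]
    (F : A) (n : ℕ) : A :=
  (qfact n)⁻¹ • F ^ n

/-- `x` satisfies the `a`-th order Serre relation with `F`:
`Σ_{t=0}^{a+1} (-1)^{a+1-t} F^{(a+1-t)} x F^{(t)} = 0`. -/
def SerreRel {A : Type*} [Ring A] [Algebra (RatFunc ℚ) A]
    (F x : A) (a : ℕ) : Prop :=
  ∑ t ∈ Finset.range (a + 2),
      ((-1 : RatFunc ℚ) ^ (a + 1 - t)) • (dpow F (a + 1 - t) * x * dpow F t) = 0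

/-!
Write `D_c z = z F - c F z`. Up to the nonzero factor `[n+1]!`, the Serre sum of order `n` is
the iterated twisted commutator `D_{v^{-n}} ⋯ D_{v^{n-2}} D_{v^n} z`: expanding the iterate
produces the signed q-binomial coefficients. The twisted Leibniz rule
`D_{c c'} (x y) = x D_{c'} y + c' (D_c x) y`, applied with `v^{a+b-2s} = v^{a-2p} v^{b-2q}` for
`p + q = s`, puts the `(a+b+1)`-fold iterate on `x y` in the span of products of a `p`-fold
iterate on `x` with a `q`-fold iterate on `y`, `p + q = a + b + 1`. In each product `p ≥ a + 1`
or `q ≥ b + 1`, so it vanishes.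
-/

open Finset

section QComm

variable {R A : Type*} [CommRing R] [Ring A] [Algebra R A]

def qComm (F : A) (c : R) : A →ₗ[R] A :=
  LinearMap.mulRight R F - c • LinearMap.mulLeft R F

@[simp]
lemma qComm_apply (F : A) (c : R) (z : A) : qComm F c z = z * F - c • (F * z) := rfl

lemma qComm_mul (F x y : A) (c c' : R) :
    qComm F (c * c') (x * y) = x * qComm F c' y + c' • (qComm F c x * y) := by
  simp only [qComm_apply, mul_sub, sub_mul, smul_sub, smul_smul, smul_mul_assoc, mul_smul_comm,
    mul_assoc, mul_comm c]
  abel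

def qCommIter (F : A) (c : ℕ → R) : ℕ → A →ₗ[R] A
  | 0 => LinearMap.id
  | k + 1 => qComm F (c k) ∘ₗ qCommIter F c k

@[simp]
lemma qCommIter_zero_apply (F : A) (c : ℕ → R) (z : A) : qCommIter F c 0 z = z := rfl

lemma qCommIter_succ_apply (F : A) (c : ℕ → R) (k : ℕ) (z : A) :
    qCommIter F c (k + 1) z = qComm F (c k) (qCommIter F c k z) := rfl

lemma qCommIter_eq_zero_of_le {F z : A} {c : ℕ → R} {k l : ℕ} (h : qCommIter F c k z = 0)
    (hkl : k ≤ l) : qCommIter F c l z = 0 := by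
  induction l, hkl using Nat.le_induction with
  | base => exact h
  | succ l _ ih => rw [qCommIter_succ_apply, ih, map_zero]

lemma qCommIter_mul_mem_span {F : A} {c c' c'' : ℕ → R} (hc : ∀ p q, c'' (p + q) = c p * c' q)
    (x y : A) (s : ℕ) :
    qCommIter F c'' s (x * y) ∈ Submodule.span R
      {w | ∃ p q, p + q = s ∧ w = qCommIter F c p x * qCommIter F c' q y} := by
  induction s with
  | zero => exact Submodule.subset_span ⟨0, 0, rfl, rfl⟩
  | succ s ih =>
    rw [qCommIter_succ_apply]
    refine Submodule.span_induction ?_ (by simp) (fun u w _ _ hu hw => by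
      rw [map_add]; exact add_mem hu hw) (fun r u _ hu => by
      rw [map_smul]; exact Submodule.smul_mem _ r hu) ih
    rintro _ ⟨p, q, rfl, rfl⟩
    rw [hc, qComm_mul]
    refine add_mem (Submodule.subset_span ⟨p, q + 1, by omega, rfl⟩)
      (Submodule.smul_mem _ _ (Submodule.subset_span ⟨p + 1, q, by omega, rfl⟩))

lemma qCommIter_mul_eq_zero {F x y : A} {c c' c'' : ℕ → R}
    (hc : ∀ p q, c'' (p + q) = c p * c' q) {a b : ℕ} (hx : qCommIter F c (a + 1) x = 0)
    (hy : qCommIter F c' (b + 1) y = 0) :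
    qCommIter F c'' (a + b + 1) (x * y) = 0 := by
  have hvanish : {w | ∃ p q, p + q = a + b + 1 ∧ w = qCommIter F c p x * qCommIter F c' q y}
      ⊆ {0} := by
    rintro _ ⟨p, q, hpq, rfl⟩
    rcases le_or_gt (a + 1) p with hp | hp
    · rw [qCommIter_eq_zero_of_le hx hp, zero_mul]; rfl
    · rw [qCommIter_eq_zero_of_le hy (by omega : b + 1 ≤ q), mul_zero]; rfl
  simpa using Submodule.span_mono hvanish (qCommIter_mul_mem_span hc x y (a + b + 1))

end QComm

namespace RatFunc

variable {K : Type*} [Field K]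

lemma X_pow_ne_one {k : ℕ} (hk : 0 < k) : (X : RatFunc K) ^ k ≠ 1 := by
  have h := (map_ne_zero_iff _ (algebraMap_injective K)).mpr (Polynomial.X_pow_sub_C_ne_zero hk 1)
  simpa [sub_eq_zero] using h

lemma X_zpow_sub_X_zpow_neg_ne_zero {m : ℕ} (hm : m ≠ 0) :
    (X : RatFunc K) ^ (m : ℤ) - X ^ (-(m : ℤ)) ≠ 0 := by
  rw [sub_ne_zero, zpow_neg, zpow_natCast]
  intro h
  have h1 := mul_inv_cancel₀ (pow_ne_zero m (X_ne_zero (K := K)))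
  rw [← h, ← pow_add] at h1
  exact X_pow_ne_one (by omega) h1

end RatFunc

section QNumbers

open RatFunc

lemma qint_natCast_ne_zero {m : ℕ} (hm : m ≠ 0) : qint m ≠ 0 := by
  refine div_ne_zero (X_zpow_sub_X_zpow_neg_ne_zero hm) ?_
  simpa using X_zpow_sub_X_zpow_neg_ne_zero (K := ℚ) one_ne_zero

lemma qint_zero : qint 0 = 0 := by simp [qint]

lemma qint_add (m s : ℤ) : qint (m + s) = X ^ s * qint m + X ^ (-m) * qint s := by
  simp only [qint, ← mul_div_assoc, ← add_div, mul_sub, ← zpow_add₀ (X_ne_zero (K := ℚ))]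
  ring_nf

lemma qfact_ne_zero (n : ℕ) : qfact n ≠ 0 :=
  prod_ne_zero_iff.mpr fun i _ => by exact_mod_cast qint_natCast_ne_zero i.succ_ne_zero

lemma qfact_succ (n : ℕ) : qfact (n + 1) = qfact n * qint (n + 1) := by
  rw [qfact, prod_range_succ]; rfl

@[simp]
lemma qbinom_zero_right (n : ℤ) : qbinom n 0 = 1 := by simp [qbinom, qfact]

lemma qbinom_natCast_of_lt {k s : ℕ} (h : k < s) : qbinom k s = 0 := by
  rw [qbinom, prod_eq_zero (mem_range.mpr h) (by rw [sub_self, qint_zero]), zero_div]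

lemma qbinom_natCast_add (s t : ℕ) :
    qbinom ((s + t : ℕ) : ℤ) s = qfact (s + t) / (qfact s * qfact t) := by
  suffices h : (∏ i ∈ range s, qint ((s + t : ℕ) - i : ℤ)) * qfact t = qfact (s + t) by
    rw [qbinom, ← h, mul_comm (qfact s), ← div_div, mul_div_cancel_right₀ _ (qfact_ne_zero t)]
  induction s with
  | zero => simp
  | succ s ih =>
    rw [prod_range_succ', mul_right_comm, show s + 1 + t = s + t + 1 by omega, qfact_succ, ← ih]
    congr 2
    refine prod_congr rfl fun i _ => congr_arg qint ?_
    push_cast; ring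

lemma qbinom_succ_succ (k : ℤ) (s : ℕ) :
    qbinom (k + 1) (s + 1) =
      X ^ ((s : ℤ) + 1) * qbinom k (s + 1) + X ^ ((s : ℤ) - k) * qbinom k s := by
  have hsplit :
      qint (k + 1) = X ^ ((s : ℤ) + 1) * qint (k - s) + X ^ ((s : ℤ) - k) * qint (s + 1) := by
    have h := qint_add (k - s) (s + 1)
    rwa [show k - s + (s + 1) = k + 1 by ring, show -(k - s) = s - k by ring] at h
  have hprod :
      ∏ i ∈ range (s + 1), qint (k + 1 - i) =
        qint (k + 1) * ∏ i ∈ range s, qint (k - i) := by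
    rw [prod_range_succ', mul_comm]
    congr 1
    · simp
    · exact prod_congr rfl fun i _ => congr_arg qint (by push_cast; ring)
  have hs : qint ((s : ℤ) + 1) ≠ 0 := by exact_mod_cast qint_natCast_ne_zero s.succ_ne_zero
  have := qfact_ne_zero s
  simp only [qbinom, hprod, prod_range_succ, qfact_succ, hsplit]
  field_simp

end QNumbers

section SerreExpansion

open RatFunc

noncomputable def serreTwist (n : ℤ) (j : ℕ) : RatFunc ℚ := X ^ (n - 2 * j)

lemma serreTwist_add (a b : ℤ) (p q : ℕ) :
    serreTwist (a + b) (p + q) = serreTwist a p * serreTwist b q := by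
  rw [serreTwist, serreTwist, serreTwist, ← zpow_add₀ X_ne_zero]
  push_cast; ring_nf

noncomputable def serreCoeff (n : ℤ) (k s : ℕ) : RatFunc ℚ :=
  (-1) ^ s * X ^ ((s : ℤ) * (n - k + 1)) * qbinom k s

lemma serreCoeff_zero_right (n : ℤ) (k : ℕ) : serreCoeff n k 0 = 1 := by simp [serreCoeff]

lemma serreCoeff_succ_self (n : ℤ) (k : ℕ) : serreCoeff n k (k + 1) = 0 := by
  rw [serreCoeff, qbinom_natCast_of_lt k.lt_succ_self, mul_zero]

lemma serreCoeff_succ_succ (n : ℤ) (k s : ℕ) :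
    serreCoeff n (k + 1) (s + 1) =
      serreCoeff n k (s + 1) - serreTwist n k * serreCoeff n k s := by
  have hX : (X : RatFunc ℚ) ≠ 0 := X_ne_zero
  have h1 :
      (X : RatFunc ℚ) ^ (((s + 1 : ℕ) : ℤ) * (n - (k + 1 : ℕ) + 1)) * X ^ ((s : ℤ) + 1) =
      X ^ (((s + 1 : ℕ) : ℤ) * (n - k + 1)) := by
    rw [← zpow_add₀ hX]; push_cast; ring_nf
  have h2 :
      (X : RatFunc ℚ) ^ (((s + 1 : ℕ) : ℤ) * (n - (k + 1 : ℕ) + 1)) * X ^ ((s : ℤ) - k) =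
      serreTwist n k * X ^ ((s : ℤ) * (n - k + 1)) := by
    rw [serreTwist, ← zpow_add₀ hX, ← zpow_add₀ hX]; push_cast; ring_nf
  simp only [serreCoeff, Nat.cast_succ, qbinom_succ_succ, pow_succ]
  push_cast at h1 h2
  linear_combination
    (-(-1) ^ s * qbinom k (s + 1)) * h1 - ((-1) ^ s * qbinom k s) * h2

variable {A : Type*} [Ring A] [Algebra (RatFunc ℚ) A]

lemma qCommIter_serreTwist_apply (F z : A) (n : ℤ) (k : ℕ) :
    qCommIter F (serreTwist n) k z =
      ∑ p ∈ antidiagonal k, serreCoeff n k p.1 • (F ^ p.1 * z * F ^ p.2) := by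
  induction k with
  | zero => simp [serreCoeff_zero_right]
  | succ k ih =>
    set g : ℕ × ℕ → A := fun p => serreCoeff n k p.1 • (F ^ p.1 * z * F ^ p.2)
    have hstep : ∀ p : ℕ × ℕ, qComm F (serreTwist n k) (g p) = g (p.1, p.2 + 1) -
        (serreTwist n k * serreCoeff n k p.1) • (F ^ (p.1 + 1) * z * F ^ p.2) := by
      intro p
      simp only [g, map_smul, qComm_apply, smul_sub, smul_smul, mul_comm (serreCoeff n k p.1),
        pow_succ F p.2, pow_succ' F p.1, mul_assoc]
    have hshift : ∑ p ∈ antidiagonal k, g (p.1, p.2 + 1) =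
        g (0, k + 1) + ∑ p ∈ antidiagonal k, g (p.1 + 1, p.2) := by
      rw [← Nat.sum_antidiagonal_succ, Nat.sum_antidiagonal_succ']
      simp [g, serreCoeff_succ_self]
    rw [qCommIter_succ_apply, ih, map_sum, sum_congr rfl fun p _ => hstep p, sum_sub_distrib,
      hshift, Nat.sum_antidiagonal_succ]
    simp only [g, serreCoeff_succ_succ, serreCoeff_zero_right, sub_smul, sum_sub_distrib]
    abel

lemma qCommIter_serreTwist_succ (F z : A) (n : ℕ) :
    qCommIter F (serreTwist n) (n + 1) z = qfact (n + 1) • ∑ t ∈ range (n + 2),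
      ((-1 : RatFunc ℚ) ^ (n + 1 - t)) • (dpow F (n + 1 - t) * z * dpow F t) := by
  rw [qCommIter_serreTwist_apply, smul_sum,
    ← Nat.sum_antidiagonal_eq_sum_range_succ
      (fun t u => qfact (n + 1) • ((-1 : RatFunc ℚ) ^ u • (dpow F u * z * dpow F t))),
    ← Nat.sum_antidiagonal_swap]
  refine sum_congr rfl fun ⟨t, u⟩ htu => ?_
  replace htu : u + t = n + 1 := by rw [add_comm]; exact HasAntidiagonal.mem_antidiagonal.mp htu
  have hcoeff : serreCoeff n (n + 1) u = (-1) ^ u * qbinom ((u + t : ℕ) : ℤ) u := by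
    rw [serreCoeff, htu]; push_cast; ring_nf; simp
  have := qfact_ne_zero u
  have := qfact_ne_zero t
  rw [Prod.fst_swap, Prod.snd_swap, hcoeff, qbinom_natCast_add, ← htu]
  simp only [dpow, smul_mul_assoc, mul_smul_comm, smul_smul]
  congr 1
  field_simp

lemma serreRel_iff_qCommIter_eq_zero (F z : A) (n : ℕ) :
    SerreRel F z n ↔ qCommIter F (serreTwist n) (n + 1) z = 0 := by
  rw [qCommIter_serreTwist_succ, smul_eq_zero_iff_right (qfact_ne_zero _), SerreRel]

end SerreExpansion

/-- If `x` satisfies the `a`-th order Serre relation with `F` and `y` satisfies the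
`b`-th order Serre relation with `F`, then `xy` satisfies the `(a+b)`-th order Serre
relation with `F`. -/
theorem serre_order_additive {A : Type*} [Ring A] [Algebra (RatFunc ℚ) A]
    (F x y : A) (a b : ℕ) (hx : SerreRel F x a) (hy : SerreRel F y b) :
    SerreRel F (x * y) (a + b) := by
  rw [serreRel_iff_qCommIter_eq_zero] at hx hy ⊢
  push_cast
  exact qCommIter_mul_eq_zero (serreTwist_add a b) hx hy
end

section
/- Fix a nonnegative integer c. For 0 ≤ s ≤ c, let P_s(T) := ∏_{t=1}^{c} (q^{s−t+1}·T − 1)/(q^t − 1), an element of ℚ(q)[T]; this is the q-binomial coefficient qbinom(a+s, c) viewed as a polynomial in the variable T = q^a. Then the c+1 polynomials P_0, P_1, …, P_c form a basis of the ℚ(q)-vector space of polynomials in T of degree at most c. -/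
/-- For `0 ≤ s ≤ c`, the polynomial `P_s(T) = ∏_{t=1}^{c} (q^{s-t+1}·T - 1)/(q^t - 1)`
in `ℚ(q)[T]`; this is the `q`-binomial coefficient `qbinom(a+s, c)` viewed as a
polynomial in the variable `T = q^a`. -/
noncomputable def Ppoly (c s : ℕ) : Polynomial (RatFunc ℚ) :=
  ∏ t ∈ Finset.Icc 1 c,
    (Polynomial.C (RatFunc.X ^ ((s : ℤ) - t + 1)) * Polynomial.X - 1) *
      Polynomial.C ((RatFunc.X ^ (t : ℕ) - 1)⁻¹)

/-!
The factors of `P_s` vanish at `T = q^{t-s-1}`, `1 ≤ t ≤ c`, so for `a ∈ ℕ` we have `P_s(q^a) = 0`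
exactly when `a + s < c`. Hence the evaluation matrix `(P_s(q^a))_{s,a ≤ c}` is zero above its
antidiagonal and nonzero on it, so it is invertible and the `P_s` are linearly independent.
Being `c + 1` independent polynomials of degree at most `c`, they span that space.
-/

open Polynomial

namespace RatFunc

variable {K : Type*} [Field K]

theorem intDegree_X_pow (n : ℕ) : intDegree ((X : RatFunc K) ^ n) = n := by
  rw [← algebraMap_X, ← map_pow, intDegree_polynomial, natDegree_X_pow]

theorem intDegree_X_zpow (k : ℤ) : intDegree ((X : RatFunc K) ^ k) = k := by
  cases k with
  | ofNat n => rw [Int.ofNat_eq_natCast, zpow_natCast, intDegree_X_pow]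
  | negSucc n => rw [zpow_negSucc, intDegree_inv, intDegree_X_pow, Int.negSucc_eq]; push_cast; ring

theorem X_pow_eq_one_iff {n : ℕ} : (X : RatFunc K) ^ n = 1 ↔ n = 0 :=
  ⟨fun h => by simpa [h] using (intDegree_X_pow (K := K) n).symm, fun h => by rw [h, pow_zero]⟩

theorem X_zpow_eq_one_iff {k : ℤ} : (X : RatFunc K) ^ k = 1 ↔ k = 0 :=
  ⟨fun h => by simpa [h] using (intDegree_X_zpow (K := K) k).symm, fun h => by rw [h, zpow_zero]⟩

end RatFunc

namespace Matrix

theorem det_ne_zero_of_antitriangular {R : Type*} [CommRing R] [IsDomain R] {n : ℕ}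
    (M : Matrix (Fin (n + 1)) (Fin (n + 1)) R)
    (hzero : ∀ i j : Fin (n + 1), (i : ℕ) + j < n → M i j = 0)
    (hanti : ∀ i : Fin (n + 1), M i i.rev ≠ 0) : M.det ≠ 0 := by
  have hlower : (M.submatrix id Fin.revPerm).IsLowerTriangular := fun i j hij =>
    hzero i j.rev (by simp only [Fin.val_rev]; have : (i : ℕ) < j := hij; omega)
  have hdet : (M.submatrix id Fin.revPerm).det ≠ 0 := by
    rw [det_of_isLowerTriangular _ hlower]
    exact Finset.prod_ne_zero_iff.2 fun i _ => hanti i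
  exact fun h => hdet (by rw [det_permute', h, mul_zero])

end Matrix

theorem Polynomial.linearIndependent_of_det_eval_ne_zero {R ι : Type*} [CommRing R] [IsDomain R]
    [Fintype ι] [DecidableEq ι] (p : ι → R[X]) (x : ι → R)
    (h : (Matrix.of fun i j => (p i).eval (x j)).det ≠ 0) : LinearIndependent R p :=
  LinearIndependent.of_comp (LinearMap.pi fun j => leval (x j))
    (Matrix.linearIndependent_rows_of_det_ne_zero h)

theorem Submodule.span_range_eq_of_linearIndependent {K V ι : Type*} [DivisionRing K]
    [AddCommGroup V] [Module K V] [Fintype ι] {v : ι → V} {W : Submodule K V}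
    [FiniteDimensional K W] (hv : LinearIndependent K v) (hmem : ∀ i, v i ∈ W)
    (hcard : Fintype.card ι = Module.finrank K W) : span K (Set.range v) = W :=
  eq_of_le_of_finrank_eq (span_le.2 (Set.range_subset_iff.2 hmem))
    ((finrank_span_eq_card hv).trans hcard)

theorem Ppoly_eval_X_pow (c s a : ℕ) :
    (Ppoly c s).eval (RatFunc.X ^ a) =
      ∏ t ∈ Finset.Icc 1 c, (RatFunc.X ^ ((s : ℤ) - t + 1 + a) - 1) * (RatFunc.X ^ t - 1)⁻¹ := by
  rw [Ppoly, eval_prod]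
  refine Finset.prod_congr rfl fun t _ => ?_
  rw [zpow_add₀ RatFunc.X_ne_zero ((s : ℤ) - t + 1) a, zpow_natCast]
  simp

theorem Ppoly_eval_X_pow_eq_zero_iff {c s a : ℕ} :
    (Ppoly c s).eval (RatFunc.X ^ a) = 0 ↔ a + s < c := by
  simp only [Ppoly_eval_X_pow, Finset.prod_eq_zero_iff, Finset.mem_Icc, mul_eq_zero,
    inv_eq_zero, sub_eq_zero, RatFunc.X_zpow_eq_one_iff, RatFunc.X_pow_eq_one_iff]
  constructor
  · rintro ⟨t, ht, h⟩
    omega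
  · exact fun h => ⟨a + s + 1, by omega, Or.inl (by push_cast; ring)⟩

theorem Ppoly_mem_degreeLT (c s : ℕ) : Ppoly c s ∈ degreeLT (RatFunc ℚ) (c + 1) := by
  have hdeg : (Ppoly c s).natDegree ≤ c :=
    calc (Ppoly c s).natDegree
        ≤ ∑ t ∈ Finset.Icc 1 c, 1 := (natDegree_prod_le _ _).trans
          (Finset.sum_le_sum fun t _ => by compute_degree)
      _ = c := by simp
  rw [mem_degreeLT]
  exact degree_le_natDegree.trans_lt (by exact_mod_cast Nat.lt_succ_of_le hdeg)

theorem Ppoly_linearIndependent (c : ℕ) :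
    LinearIndependent (RatFunc ℚ) (fun s : Fin (c + 1) => Ppoly c s) := by
  refine linearIndependent_of_det_eval_ne_zero _ (fun a : Fin (c + 1) => RatFunc.X ^ (a : ℕ)) ?_
  refine Matrix.det_ne_zero_of_antitriangular _ (fun s a h => ?_) fun s => ?_
  · exact Ppoly_eval_X_pow_eq_zero_iff.2 (by omega)
  · simp only [Matrix.of_apply, Fin.val_rev]
    exact fun h => by have := Ppoly_eval_X_pow_eq_zero_iff.1 h; omega

/-- The `c+1` polynomials `P_0, …, P_c` form a basis of the `ℚ(q)`-vector space of
polynomials of degree at most `c`: they are linearly independent and span the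
space of polynomials of degree `< c + 1`. -/
theorem Ppoly_basis (c : ℕ) :
    LinearIndependent (RatFunc ℚ) (fun s : Fin (c + 1) => Ppoly c s) ∧
      Submodule.span (RatFunc ℚ) (Set.range fun s : Fin (c + 1) => Ppoly c s)
        = Polynomial.degreeLT (RatFunc ℚ) (c + 1) := by
  have := Module.Finite.of_basis (degreeLT.basis (RatFunc ℚ) (c + 1))
  refine ⟨Ppoly_linearIndependent c,
    Submodule.span_range_eq_of_linearIndependent (Ppoly_linearIndependent c)
      (fun s => Ppoly_mem_degreeLT c s) ?_⟩
  rw [Module.finrank_eq_card_basis (degreeLT.basis _ _)]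
end

section
/- Fix an integer r ≥ 0, and for integers n ≥ 0 and m_1, …, m_r ≥ 0 let S(n, m_1, …, m_r) denote the number of steep sequences of degree (n; m_1, …, m_r); extend S by 0 whenever any argument is negative. Then S(0, 0, …, 0) = 1, and for every (n, m_1, …, m_r) ≠ (0, 0, …, 0) with all entries nonnegative: S(n, m⃗) = Σ_{k ≥ 1} S(n−k, m⃗) − Σ_{∅ ≠ p ⊆ {1,…,r}} (−1)^{|p|} S(n, m⃗ − e⃗_p) + Σ_{k ≥ 1} Σ_{∅ ≠ p ⊆ {1,…,r}} (−1)^{|p|} S(n−k, m⃗ − (k+1)·e⃗_p), where e⃗_p denotes the 0-1 vector with 1 in coordinate i exactly when i ∈ p. -/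
/-- A steep sequence of degree `(n; m_1, …, m_r)`: an integer `N ≥ 0`, positive
integers `c_1, …, c_N` summing to `n`, and nonnegative integers `p_{i,k}`
(`0 ≤ i ≤ N`, `1 ≤ k ≤ r`) with `Σ_i p_{i,k} = m_k` and `p_{i,k} ≤ c_i` for
`1 ≤ i ≤ N`. -/
structure SteepSeq (r n : ℕ) (m : Fin r → ℕ) where
  N : ℕ
  c : Fin N → ℕ
  c_pos : ∀ i, 0 < c i
  p : Fin (N + 1) → Fin r → ℕ
  sum_c : ∑ i, c i = n
  sum_p : ∀ k, ∑ i, p i k = m k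
  steep : ∀ (i : Fin N) (k : Fin r), p i.succ k ≤ c i

/-- `S r n m` is the number of steep sequences of degree `(n; m)`, extended by `0`
whenever any argument is negative. -/
noncomputable def steepCount (r : ℕ) (n : ℤ) (m : Fin r → ℤ) : ℤ :=
  if 0 ≤ n ∧ ∀ k, 0 ≤ m k then
    (Nat.card (SteepSeq r n.toNat fun k => (m k).toNat) : ℤ)
  else 0

/-- The 0-1 vector `e⃗_p` with `1` in coordinate `i` exactly when `i ∈ p`. -/
def evec {r : ℕ} (p : Finset (Fin r)) : Fin r → ℤ := fun i => if i ∈ p then 1 else 0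

/-!
Splitting off the initial block `p_0` gives `S(n, m) = Σ_{0 ≤ v ≤ m} T(n, v)`, where `T(n, v)`
counts the steep sequences with `p_0 = 0`, i.e. the lists of blocks `(c, q)` with `0 ≤ q ≤ c`
summing to `(n, v)`. Inclusion–exclusion over the coordinates turns
`Σ_p (-1)^|p| S(n, m - t e_p)` into the sum of `T(n, v)` over the `v ≤ m` with `m - v < t` in
every coordinate; for `t = 1` this is `T(n, m)`. Removing the first block `(k, m - v)` of a list
gives `T(n, m) = Σ_{k ≥ 1} Σ_{m - k ≤ v ≤ m} T(n - k, v)` for `(n, m) ≠ 0`, and the inner sum is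
the case `t = k + 1` at degree `n - k`.
-/

open Finset

lemma finsum_one_le_eq_sum_Icc {M : Type*} [AddCommMonoid M] {f : ℕ → M} {n : ℕ}
    (hf : ∀ k, n < k → f k = 0) : ∑ᶠ (k : ℕ) (_ : 1 ≤ k), f k = ∑ k ∈ Icc 1 n, f k :=
  finsum_cond_eq_sum_of_cond_iff f fun {k} hk => by
    rw [mem_Icc, iff_self_and]
    exact fun _ => not_lt.mp (mt (hf k) hk)

section Decompositions

variable {α : Type*} [AddCommGroup α] [PartialOrder α] [IsOrderedAddMonoid α] {B : Set α}

def decompositions (B : Set α) (d : α) : Set (List α) := {l | (∀ e ∈ l, e ∈ B) ∧ l.sum = d}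

lemma nonneg_of_mem_decompositions (hB : ∀ e ∈ B, 0 ≤ e) {d : α} {l : List α}
    (hl : l ∈ decompositions B d) : 0 ≤ d :=
  hl.2 ▸ List.sum_nonneg fun e he => hB e (hl.1 e he)

variable [LocallyFiniteOrder α] [DecidablePred (· ∈ B)]

def consDecompositions (d : α) :
    PLift (d = 0) ⊕ (Σ x : {x ∈ Icc 0 d | d - x ∈ B}, decompositions B x) →
      decompositions B d
  | .inl h => ⟨[], by simp [decompositions, h.down]⟩
  | .inr ⟨x, l⟩ => ⟨(d - x) :: l, by
      obtain ⟨hlB, hl⟩ := l.2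
      refine ⟨?_, by simp [hl]⟩
      simpa using ⟨(mem_filter.mp x.2).2, hlB⟩⟩

lemma consDecompositions_bijective (hB : ∀ e ∈ B, 0 ≤ e) (d : α) :
    Function.Bijective (consDecompositions (B := B) d) := by
  constructor
  · rintro (h₁ | ⟨x₁, l₁⟩) (h₂ | ⟨x₂, l₂⟩) h <;>
      simp only [consDecompositions, Subtype.mk.injEq, reduceCtorEq, List.cons.injEq] at h
    · exact congrArg Sum.inl (Subsingleton.elim _ _)
    · have hx : (x₁ : α) = x₂ := by rw [← l₁.2.2, ← l₂.2.2, h.2]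
      exact congrArg Sum.inr (Sigma.subtype_ext (Subtype.ext hx) h.2)
  · rintro ⟨_ | ⟨e, l⟩, hlB, hl⟩
    · exact ⟨.inl ⟨hl.symm⟩, rfl⟩
    · have he : e ∈ B := hlB e List.mem_cons_self
      have hl' : l ∈ decompositions B l.sum :=
        ⟨fun x hx => hlB x (List.mem_cons_of_mem e hx), rfl⟩
      have hsub : d - l.sum = e := by rw [← hl, List.sum_cons]; abel
      have hmem : l.sum ∈ {x ∈ Icc 0 d | d - x ∈ B} := by
        refine mem_filter.mpr ⟨mem_Icc.mpr ⟨nonneg_of_mem_decompositions hB hl', ?_⟩, hsub ▸ he⟩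
        rw [← sub_nonneg, hsub]
        exact hB e he
      exact ⟨.inr ⟨⟨l.sum, hmem⟩, ⟨l, hl'⟩⟩, by simp [consDecompositions, hsub]⟩

lemma finite_decompositions (hB : ∀ e ∈ B, 0 < e) (d : α) : (decompositions B d).Finite := by
  induction hd : #(Icc 0 d) using Nat.strong_induction_on generalizing d with
  | _ N ih =>
    have (x : {x ∈ Icc 0 d | d - x ∈ B}) : Finite (decompositions B x) := by
      obtain ⟨hx, hdx⟩ := mem_filter.mp x.2
      obtain ⟨hx0, hxd⟩ := mem_Icc.mp hx
      refine (ih _ ?_ x rfl).to_subtype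
      rw [← hd]
      exact card_lt_card (Icc_ssubset_Icc_right (hx0.trans hxd) le_rfl (sub_pos.mp (hB _ hdx)))
    exact Set.finite_coe_iff.mp <| Finite.of_surjective _
      (consDecompositions_bijective (fun e he => (hB e he).le) d).2

lemma card_decompositions [DecidableEq α] (hB : ∀ e ∈ B, 0 < e) (d : α) :
    Nat.card (decompositions B d) = (if d = 0 then 1 else 0) +
      ∑ x ∈ Icc 0 d with d - x ∈ B, Nat.card (decompositions B x) := by
  have (x : α) : Finite (decompositions B x) := (finite_decompositions hB x).to_subtype
  rw [← Nat.card_eq_of_bijective _ (consDecompositions_bijective (fun e he => (hB e he).le) d),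
    Nat.card_sum, Nat.card_sigma,
    Finset.sum_coe_sort (f := fun x => Nat.card (decompositions B x))]
  split_ifs with h <;> simp [h]

end Decompositions

section BoxInclusionExclusion

variable {r : ℕ}

lemma Icc_sub_smul_evec (l m : Fin r → ℤ) {t : ℤ} (ht : 0 ≤ t) (p : Finset (Fin r)) :
    Icc l (m - t • evec p) = {v ∈ Icc l m | ∀ i ∈ p, t ≤ m i - v i} := by
  ext v
  simp only [mem_filter, mem_Icc, Pi.le_def, Pi.sub_apply, Pi.smul_apply, evec, smul_eq_mul]
  constructor
  · rintro ⟨hl, hm⟩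
    refine ⟨⟨hl, fun i => ?_⟩, fun i hi => ?_⟩
    · have := hm i; split_ifs at this <;> linarith
    · have := hm i; rw [if_pos hi] at this; linarith
  · rintro ⟨⟨hl, hm⟩, hp⟩
    refine ⟨hl, fun i => ?_⟩
    split_ifs with hi
    · linarith [hp i hi]
    · linarith [hm i]

lemma sum_powerset_neg_one_pow_mul_sum_Icc (f : (Fin r → ℤ) → ℤ) (l m : Fin r → ℤ) {t : ℤ}
    (ht : 0 ≤ t) :
    ∑ p ∈ univ.powerset, (-1) ^ #p * ∑ v ∈ Icc l (m - t • evec p), f v =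
      ∑ v ∈ Icc l m with ∀ i, m i - v i < t, f v := by
  simp_rw [Icc_sub_smul_evec l m ht, sum_filter, mul_sum]
  rw [sum_comm]
  refine sum_congr rfl fun v _ => ?_
  set S : Finset (Fin r) := {i | t ≤ m i - v i}
  have hS : {p ∈ (univ : Finset (Fin r)).powerset | ∀ i ∈ p, t ≤ m i - v i} = S.powerset := by
    ext p
    simp [S, subset_iff]
  simp_rw [mul_ite, mul_zero]
  rw [← sum_filter, hS, ← sum_mul, sum_powerset_neg_one_pow_card]
  simp [S, filter_eq_empty_iff]

end BoxInclusionExclusion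

section SteepSequences

variable {r : ℕ}

def steepBlocks (r : ℕ) : Set (ℤ × (Fin r → ℤ)) := {e | 0 < e.1 ∧ ∀ k, 0 ≤ e.2 k ∧ e.2 k ≤ e.1}

lemma steepBlocks_pos : ∀ e ∈ steepBlocks r, 0 < e :=
  fun _ he => Prod.lt_iff.mpr (.inl ⟨he.1, fun k => (he.2 k).1⟩)

instance (d : ℤ × (Fin r → ℤ)) : Finite (decompositions (steepBlocks r) d) := by
  classical
  exact (finite_decompositions steepBlocks_pos d).to_subtype

-- The steep sequences of degree `(n; m)` with `p_0 = 0`, each stored as the list of its blocks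
-- `(c_i, p_{i,·})`.
noncomputable def steepTailCount (r : ℕ) (n : ℤ) (m : Fin r → ℤ) : ℤ :=
  Nat.card (decompositions (steepBlocks r) (n, m))

lemma steepTailCount_recursion (n : ℕ) (m : Fin r → ℤ) :
    steepTailCount r n m = (if n = 0 ∧ m = 0 then 1 else 0) +
      ∑ k ∈ Icc 1 n, ∑ v ∈ Icc 0 m with ∀ i, m i - v i < k + 1,
        steepTailCount r ((n : ℤ) - k) v := by
  classical
  rw [steepTailCount, card_decompositions steepBlocks_pos]
  push_cast
  congr 1
  · simp [Prod.ext_iff]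
  · simp_rw [sum_filter (s := Icc 0 m), ← sum_product' (Icc 1 n), ← sum_filter]
    refine sum_nbij' (fun x => ((n - x.1).toNat, x.2)) (fun y => (n - y.1, y.2)) ?_ ?_ ?_ ?_ ?_ <;>
      rintro ⟨k, v⟩ h <;>
      simp only [mem_filter, mem_product] at h ⊢ <;>
      simp only [mem_Icc, Prod.le_def, Pi.le_def, Set.mem_ofPred_eq, steepBlocks, Prod.fst_zero,
        Prod.snd_zero, Pi.zero_apply, Prod.mk_sub_mk, Pi.sub_apply, Prod.mk.injEq, and_true] at h ⊢
    · obtain ⟨⟨⟨hk0, hv0⟩, hkn, hvm⟩, hpos, hblk⟩ := h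
      exact ⟨⟨⟨by omega, by omega⟩, hv0, hvm⟩, fun i => by have := hblk i; omega⟩
    · obtain ⟨⟨⟨hk1, hkn⟩, hv0, hvm⟩, hblk⟩ := h
      exact ⟨⟨⟨by omega, hv0⟩, by omega, hvm⟩, by omega,
        fun i => ⟨by have := hvm i; omega, by have := hblk i; omega⟩⟩
    · omega
    · omega
    · rw [steepTailCount, Int.toNat_of_nonneg (by omega), sub_sub_cancel]
      rfl

namespace SteepSeq

variable {N : ℕ} {M : Fin r → ℕ}

lemma p_le (s : SteepSeq r N M) (i : Fin (s.N + 1)) (k : Fin r) : s.p i k ≤ M k :=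
  s.sum_p k ▸ single_le_sum (f := fun j => s.p j k) (fun _ _ => Nat.zero_le _) (mem_univ i)

def tail (s : SteepSeq r N M) : List (ℤ × (Fin r → ℤ)) :=
  List.ofFn fun i => ((s.c i : ℤ), fun k => (s.p i.succ k : ℤ))

lemma tail_mem_decompositions (s : SteepSeq r N M) :
    s.tail ∈ decompositions (steepBlocks r) (N, fun k => (M k : ℤ) - s.p 0 k) := by
  constructor
  · intro e he
    obtain ⟨i, rfl⟩ := List.mem_ofFn.mp he
    exact ⟨by simpa using s.c_pos i, fun k => ⟨by simp, by simpa using s.steep i k⟩⟩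
  · rw [tail, List.sum_ofFn, Prod.ext_iff, Prod.fst_sum, Prod.snd_sum]
    refine ⟨by simpa using congrArg ((↑) : ℕ → ℤ) s.sum_c, funext fun k => ?_⟩
    have h := s.sum_p k
    rw [Fin.sum_univ_succ] at h
    rw [Finset.sum_apply, eq_sub_iff_add_eq', ← h]
    push_cast
    rfl

def split (s : SteepSeq r N M) :
    Σ v : Icc (0 : Fin r → ℤ) (fun k => (M k : ℤ)), decompositions (steepBlocks r) (N, v) :=
  ⟨⟨fun k => M k - s.p 0 k, by simp [mem_Icc, Pi.le_def, s.p_le]⟩,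
    ⟨s.tail, s.tail_mem_decompositions⟩⟩

lemma split_injective : Function.Injective (split (r := r) (N := N) (M := M)) := by
  rintro ⟨N₁, c₁, _, p₁, _, _, _⟩ ⟨N₂, c₂, _, p₂, _, _, _⟩ h
  have h₀ := congrArg (fun x => (x.1 : Fin r → ℤ)) h
  have ht := congrArg (fun x => (x.2 : List (ℤ × (Fin r → ℤ)))) h
  simp only [split, tail, List.ofFn_inj', Sigma.mk.inj_iff] at h₀ ht
  obtain ⟨rfl, ht⟩ := ht
  have ht := eq_of_heq ht
  have hc : c₁ = c₂ := funext fun i => by simpa using congrArg (fun f => (f i).1) ht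
  have hp : p₁ = p₂ := by
    funext i k
    induction i using Fin.cases with
    | zero => simpa using congrFun h₀ k
    | succ i => simpa using congrFun (congrArg (fun f => (f i).2) ht) k
  subst hc hp
  rfl

lemma split_surjective : Function.Surjective (split (r := r) (N := N) (M := M)) := by
  rintro ⟨⟨v, hv⟩, ⟨l, hlB, hl⟩⟩
  have hvM : ∀ k, 0 ≤ v k ∧ v k ≤ M k := by simpa [mem_Icc, Pi.le_def, forall_and] using hv
  have hblk (i : Fin l.length) : l[(i : ℕ)] ∈ steepBlocks r := hlB _ (List.getElem_mem _)
  have hsum : ∑ i : Fin l.length, l[(i : ℕ)] = ((N : ℤ), v) := by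
    rw [← List.sum_ofFn, List.ofFn_getElem, hl]
  have hc : ((∑ i : Fin l.length, l[(i : ℕ)].1.toNat : ℕ) : ℤ) = N := by
    rw [← show (∑ i : Fin l.length, l[(i : ℕ)]).1 = N by rw [hsum], Prod.fst_sum, Nat.cast_sum]
    exact sum_congr rfl fun i _ => Int.toNat_of_nonneg (hblk i).1.le
  have hp (k : Fin r) : ((∑ i : Fin l.length, (l[(i : ℕ)].2 k).toNat : ℕ) : ℤ) = v k := by
    rw [← show (∑ i : Fin l.length, l[(i : ℕ)]).2 k = v k by rw [hsum], Prod.snd_sum,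
      Finset.sum_apply, Nat.cast_sum]
    exact sum_congr rfl fun i _ => Int.toNat_of_nonneg ((hblk i).2 k).1
  refine ⟨⟨l.length, fun i => l[(i : ℕ)].1.toNat, fun i => by have := (hblk i).1; omega,
    Fin.cons (fun k => (M k - v k).toNat) fun i k => (l[(i : ℕ)].2 k).toNat, by exact_mod_cast hc,
    fun k => ?_, fun i k => ?_⟩, ?_⟩
  · have := hp k
    have := hvM k
    rw [Fin.sum_univ_succ]
    simp only [Fin.cons_zero, Fin.cons_succ]
    omega
  · have := (hblk i).2 k
    simp only [Fin.cons_succ]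
    omega
  · refine Sigma.subtype_ext (Subtype.ext (funext fun k => ?_)) ?_
    · have := hvM k
      simp only [split, Fin.cons_zero]
      omega
    · refine (congrArg List.ofFn (funext fun i => Prod.ext ?_ (funext fun k => ?_))).trans
        List.ofFn_getElem
      · exact Int.toNat_of_nonneg (hblk i).1.le
      · exact Int.toNat_of_nonneg ((hblk i).2 k).1

end SteepSeq

lemma steepCount_of_neg {n : ℤ} (hn : n < 0) (m : Fin r → ℤ) : steepCount r n m = 0 :=
  if_neg fun h => hn.not_ge h.1

lemma steepCount_eq_sum_steepTailCount {n : ℤ} (hn : 0 ≤ n) (m : Fin r → ℤ) :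
    steepCount r n m = ∑ v ∈ Icc 0 m, steepTailCount r n v := by
  by_cases hm : 0 ≤ m
  swap
  · rw [steepCount, if_neg fun h => hm h.2, Icc_eq_empty hm, sum_empty]
  lift n to ℕ using hn
  obtain ⟨M, rfl⟩ : ∃ M : Fin r → ℕ, m = fun k => (M k : ℤ) :=
    ⟨fun k => (m k).toNat, funext fun k => (Int.toNat_of_nonneg (hm k)).symm⟩
  rw [steepCount, if_pos ⟨n.cast_nonneg, hm⟩]
  simp only [Int.toNat_natCast]
  rw [Nat.card_eq_of_bijective _ ⟨SteepSeq.split_injective, SteepSeq.split_surjective⟩,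
    Nat.card_sigma, Nat.cast_sum]
  exact sum_coe_sort _ fun v => steepTailCount r n v

lemma sum_powerset_steepCount {n : ℤ} (hn : 0 ≤ n) (m : Fin r → ℤ) {t : ℤ} (ht : 0 ≤ t) :
    ∑ p ∈ univ.powerset, (-1) ^ #p * steepCount r n (m - t • evec p) =
      ∑ v ∈ Icc 0 m with ∀ i, m i - v i < t, steepTailCount r n v := by
  simp_rw [steepCount_eq_sum_steepTailCount hn]
  exact sum_powerset_neg_one_pow_mul_sum_Icc _ _ _ ht

lemma filter_Icc_sub_lt_one {m : Fin r → ℤ} (hm : 0 ≤ m) :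
    {v ∈ Icc 0 m | ∀ i, m i - v i < 1} = {m} := by
  ext v
  simp only [mem_filter, mem_Icc, mem_singleton, Pi.le_def, funext_iff]
  constructor
  · rintro ⟨⟨-, hvm⟩, hv⟩ i
    linarith [hvm i, hv i]
  · intro hv
    simp only [hv, sub_self, zero_lt_one, le_refl, implies_true, and_true]
    exact hm

lemma sum_powerset_steepCount_recursion (n : ℕ) {m : Fin r → ℤ} (hm : 0 ≤ m)
    (hnm : ¬(n = 0 ∧ m = 0)) :
    ∑ p ∈ univ.powerset, (-1) ^ #p * steepCount r n (m - evec p) =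
      ∑ k ∈ Icc 1 n, ∑ p ∈ univ.powerset,
        (-1) ^ #p * steepCount r ((n : ℤ) - k) (m - ((k : ℤ) + 1) • evec p) := by
  have h₁ := sum_powerset_steepCount (r := r) n.cast_nonneg m zero_le_one
  simp_rw [one_smul] at h₁
  rw [h₁, filter_Icc_sub_lt_one hm, sum_singleton, steepTailCount_recursion, if_neg hnm, zero_add]
  refine sum_congr rfl fun k hk => (sum_powerset_steepCount ?_ m (by positivity)).symm
  have := (mem_Icc.mp hk).2
  omega

lemma evec_empty : evec (∅ : Finset (Fin r)) = 0 := by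
  funext k
  simp [evec]

end SteepSequences

/-- `S(0,0,…,0) = 1`, and for every `(n, m⃗) ≠ (0, 0⃗)` with nonnegative entries,
`S(n, m⃗) = Σ_{k ≥ 1} S(n-k, m⃗) − Σ_{∅ ≠ p ⊆ {1,…,r}} (-1)^{|p|} S(n, m⃗ - e⃗_p)`
`+ Σ_{k ≥ 1} Σ_{∅ ≠ p ⊆ {1,…,r}} (-1)^{|p|} S(n-k, m⃗ - (k+1)e⃗_p)`. -/
theorem steepCount_recursion (r : ℕ) :
    steepCount r 0 0 = 1 ∧
    ∀ (n : ℤ) (m : Fin r → ℤ), 0 ≤ n → (∀ k, 0 ≤ m k) →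
      ¬(n = 0 ∧ ∀ k, m k = 0) →
      steepCount r n m =
        (∑ᶠ (k : ℕ) (_ : 1 ≤ k), steepCount r (n - k) m)
        - (∑ p ∈ (Finset.univ : Finset (Fin r)).powerset.erase ∅,
            (-1 : ℤ) ^ p.card * steepCount r n (m - evec p))
        + ∑ᶠ (k : ℕ) (_ : 1 ≤ k),
            ∑ p ∈ (Finset.univ : Finset (Fin r)).powerset.erase ∅,
              (-1 : ℤ) ^ p.card * steepCount r (n - k) (m - ((k : ℤ) + 1) • evec p) := by
  refine ⟨?_, fun n m hn hm hnm => ?_⟩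
  · rw [steepCount_eq_sum_steepTailCount le_rfl, Icc_self, sum_singleton]
    simpa using steepTailCount_recursion (r := r) 0 0
  lift n to ℕ using hn
  have key := sum_powerset_steepCount_recursion n hm (by simpa [funext_iff] using hnm)
  simp only [← add_sum_erase _ _ (empty_mem_powerset univ), card_empty, pow_zero, one_mul,
    evec_empty, smul_zero, sub_zero, sum_add_distrib] at key
  have hvanish (k : ℕ) (hk : n < k) (v : Fin r → ℤ) : steepCount r (n - k) v = 0 :=
    steepCount_of_neg (by omega) v
  rw [finsum_one_le_eq_sum_Icc fun k hk => hvanish k hk m,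
    finsum_one_le_eq_sum_Icc fun k hk => sum_eq_zero fun p _ => by rw [hvanish k hk, mul_zero]]
  linarith
end

section
/- Fix an integer r ≥ 0, and for nonnegative integers n, m_1, …, m_r let S(n, m_1, …, m_r) denote the number of steep sequences of degree (n; m_1, …, m_r). Then, in the ring of formal power series ℤ[[y, x_1, …, x_r]], the generating function F := Σ_{n, m_1, …, m_r ≥ 0} S(n, m_1, …, m_r) · y^n x_1^{m_1} ⋯ x_r^{m_r} satisfies G · F = 1, where G := Σ_{p ⊆ {1, …, r}} (−1)^{|p|} π(p) · (1 − Σ_{k ≥ 1} (π(p) y)^k), the sum is over all subsets p of {1, …, r}, and π(p) := ∏_{i ∈ p} x_i. -/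
/-- The variable `y` in `ℤ[[y, x_1, …, x_r]]`, realized as the multivariate power
series ring in the variables indexed by `Option (Fin r)`, with `y = X none`. -/
noncomputable def yvar (r : ℕ) : MvPowerSeries (Option (Fin r)) ℤ :=
  MvPowerSeries.X none

/-- `π(p) = ∏_{i ∈ p} x_i`, with `x_i = X (some i)`. -/
noncomputable def piProd {r : ℕ} (p : Finset (Fin r)) :
    MvPowerSeries (Option (Fin r)) ℤ :=
  ∏ i ∈ p, MvPowerSeries.X (some i)

/-- The geometric series `Σ_{k ≥ 1} (π(p) y)^k`, a well-defined formal power series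
since `π(p) y` has zero constant term: its coefficient at each exponent `d` is the
(finitely supported) sum of the corresponding coefficients of the `(π(p) y)^k`. -/
noncomputable def geomSeries {r : ℕ} (p : Finset (Fin r)) :
    MvPowerSeries (Option (Fin r)) ℤ :=
  fun d => ∑ᶠ (k : ℕ) (_ : 1 ≤ k), MvPowerSeries.coeff d ((piProd p * yvar r) ^ k)

/-- `G := Σ_{p ⊆ {1,…,r}} (-1)^{|p|} π(p) (1 − Σ_{k ≥ 1} (π(p) y)^k)`. -/
noncomputable def Gseries (r : ℕ) : MvPowerSeries (Option (Fin r)) ℤ :=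
  ∑ p ∈ (Finset.univ : Finset (Fin r)).powerset,
    (-1 : MvPowerSeries (Option (Fin r)) ℤ) ^ p.card * piProd p * (1 - geomSeries p)


/-!
Removing the last block `(c_N; p_{N,1}, …, p_{N,r})` of a steep sequence shows `F = A + B F`,
where `A = ∏_k (1 - x_k)⁻¹` counts the row `p_0` alone and
`B = Σ_{j ≥ 1} y^j ∏_k (1 + x_k + ⋯ + x_k^j)` counts one block. With `C = ∏_k (1 - x_k)` we
get `C A = 1`, hence `C (1 - B) F = 1`. Expanding `C B = Σ_{j ≥ 1} y^j ∏_k (1 - x_k^{j+1})` over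
subsets `p` gives `Σ_p (-1)^{|p|} π(p) Σ_{j ≥ 1} (π(p) y)^j`, so `C (1 - B) = G`.
All these series have coefficients of the product form `a(j) ∏_k g_k(j, e_k)` at `y^j x^e`,
on which multiplication by `x_k` or by `y` acts as an index shift; the identities are checked
in that form.
-/

open MvPowerSeries Finset

variable {r : ℕ}

/-- `shift h` is the coefficient sequence of `x * f` when `h` is that of `f`. -/
def shift (h : ℕ → ℤ) : ℕ → ℤ
  | 0 => 0
  | e + 1 => h e

@[simp] lemma shift_zero (h : ℕ → ℤ) : shift h 0 = 0 := rfl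

@[simp] lemma shift_succ (h : ℕ → ℤ) (e : ℕ) : shift h (e + 1) = h e := rfl

noncomputable def prodSeries (a : ℕ → ℤ) (g : Fin r → ℕ → ℕ → ℤ) :
    MvPowerSeries (Option (Fin r)) ℤ :=
  fun d => a (d none) * ∏ k, g k (d none) (d (some k))

lemma coeff_prodSeries (a : ℕ → ℤ) (g : Fin r → ℕ → ℕ → ℤ) (d : Option (Fin r) →₀ ℕ) :
    coeff d (prodSeries a g) = a (d none) * ∏ k, g k (d none) (d (some k)) :=
  rfl

lemma prodSeries_eq_one :
    prodSeries (r := r) (fun j => if j = 0 then 1 else 0) (fun _ _ e => if e = 0 then 1 else 0)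
      = 1 := by
  ext d
  rw [coeff_prodSeries, coeff_one, Fintype.prod_boole, ite_zero_mul_ite_zero, one_mul]
  simp [Finsupp.ext_iff, Option.forall]

lemma X_some_mul_prodSeries (i : Fin r) (a : ℕ → ℤ) (g : Fin r → ℕ → ℕ → ℤ) :
    X (some i) * prodSeries a g
      = prodSeries a (fun k => if k = i then fun j => shift (g k j) else g k) := by
  ext d
  rw [X_def, coeff_monomial_mul, one_mul, coeff_prodSeries, coeff_prodSeries]
  rcases hd : d (some i) with _ | e
  · rw [if_neg (by simp [Finsupp.single_le_iff, hd])]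
    exact (mul_eq_zero_of_right _ (prod_eq_zero (mem_univ i) (by simp [hd]))).symm
  · rw [if_pos (by simp [Finsupp.single_le_iff, hd])]
    have hnone : (d - Finsupp.single (some i) 1 : Option (Fin r) →₀ ℕ) none = d none := by simp
    rw [hnone]
    congr 1
    refine Finset.prod_congr rfl fun k _ => ?_
    by_cases hk : k = i
    · subst hk; simp [hd]
    · simp [hk]

lemma yvar_mul_prodSeries (a : ℕ → ℤ) (g : Fin r → ℕ → ℕ → ℤ) :
    yvar r * prodSeries a g = prodSeries (shift a) (fun k j => g k (j - 1)) := by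
  ext d
  simp only [yvar, X_def, coeff_monomial_mul, one_mul, coeff_prodSeries]
  rcases hd : d none with _ | j
  · rw [if_neg (by simp [Finsupp.single_le_iff, hd]), shift_zero, zero_mul]
  · rw [if_pos (by simp [Finsupp.single_le_iff, hd])]
    simp [hd]

lemma piProd_mul_prodSeries (p : Finset (Fin r)) (a : ℕ → ℤ) (g : Fin r → ℕ → ℕ → ℤ) :
    piProd p * prodSeries a g
      = prodSeries a (fun k => if k ∈ p then fun j => shift (g k j) else g k) := by
  induction p using Finset.induction_on with
  | empty => simp [piProd]
  | insert i p hi ih =>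
    rw [piProd, prod_insert hi, mul_assoc, ← piProd, ih, X_some_mul_prodSeries]
    congr 1
    funext k
    by_cases hk : k = i
    · subst hk; simp [hi]
    · simp [hk]

lemma shift_indicator (n : ℕ) :
    shift (fun e => if e = n then 1 else 0) = fun e => if e = n + 1 then 1 else 0 := by
  funext e
  cases e <;> simp

lemma pow_piProd_mul_yvar (p : Finset (Fin r)) (n : ℕ) :
    (piProd p * yvar r) ^ n = prodSeries (fun j => if j = n then 1 else 0)
      (fun k => if k ∈ p then fun j e => if e = j then 1 else 0
        else fun _ e => if e = 0 then 1 else 0) := by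
  induction n with
  | zero =>
    rw [pow_zero, ← prodSeries_eq_one]
    ext d
    by_cases hd : d none = 0
    · simp only [coeff_prodSeries, hd]
      congr 1
      refine Finset.prod_congr rfl fun k _ => ?_
      by_cases hk : k ∈ p <;> simp [hk]
    · simp [coeff_prodSeries, hd]
  | succ n ih =>
    rw [pow_succ', mul_assoc, ih, yvar_mul_prodSeries, piProd_mul_prodSeries, shift_indicator]
    ext d
    by_cases hd : d none = n + 1
    · simp only [coeff_prodSeries, hd]
      congr 1
      refine Finset.prod_congr rfl fun k _ => ?_
      by_cases hk : k ∈ p <;> simp [hk, shift_indicator]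
    · simp [coeff_prodSeries, hd]

lemma geomSeries_eq (p : Finset (Fin r)) :
    geomSeries p = prodSeries (fun j => if 1 ≤ j then 1 else 0)
      (fun k => if k ∈ p then fun j e => if e = j then 1 else 0
        else fun _ e => if e = 0 then 1 else 0) := by
  ext d
  change ∑ᶠ (n : ℕ) (_ : 1 ≤ n), coeff d ((piProd p * yvar r) ^ n) = _
  simp only [pow_piProd_mul_yvar, coeff_prodSeries]
  rw [finsum_eq_single _ (d none) fun n hn => by simp [Ne.symm hn]]
  by_cases hd : 1 ≤ d none <;> simp [hd]

lemma coeff_neg_one_pow_mul (n : ℕ) (φ : MvPowerSeries (Option (Fin r)) ℤ)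
    (d : Option (Fin r) →₀ ℕ) : coeff d ((-1) ^ n * φ) = (-1) ^ n * coeff d φ := by
  rw [← map_one (C (σ := Option (Fin r))), ← map_neg, ← map_pow, coeff_C_mul]

lemma sum_neg_one_pow_mul_prodSeries (a : ℕ → ℤ) (g₀ g₁ : Fin r → ℕ → ℕ → ℤ) :
    ∑ p ∈ (univ : Finset (Fin r)).powerset,
        (-1) ^ p.card * prodSeries a (fun k => if k ∈ p then g₁ k else g₀ k)
      = prodSeries a (fun k j e => g₀ k j e - g₁ k j e) := by
  ext d
  rw [map_sum, coeff_prodSeries, prod_sub, mul_sum]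
  refine sum_congr rfl fun p _ => ?_
  rw [coeff_neg_one_pow_mul, coeff_prodSeries]
  simp only [ite_apply, prod_ite, filter_mem_eq_inter, univ_inter, filter_not]
  ring

noncomputable def prodOneSubX (r : ℕ) : MvPowerSeries (Option (Fin r)) ℤ :=
  ∏ k : Fin r, (1 - X (some k))

lemma prodOneSubX_eq_sum :
    prodOneSubX r = ∑ p ∈ (univ : Finset (Fin r)).powerset, (-1) ^ p.card * piProd p := by
  simp [prodOneSubX, prod_sub, piProd]

lemma prodOneSubX_mul_prodSeries (a : ℕ → ℤ) (g : Fin r → ℕ → ℕ → ℤ) :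
    prodOneSubX r * prodSeries a g = prodSeries a (fun k j e => g k j e - shift (g k j) e) := by
  simp_rw [prodOneSubX_eq_sum, sum_mul, mul_assoc, piProd_mul_prodSeries]
  exact sum_neg_one_pow_mul_prodSeries a g fun k j => shift (g k j)

/-- Generating function `Σ_{j ≥ 1} y^j ∏_k (1 + x_k + ⋯ + x_k^j)` of a single block
`(c_i; p_{i,1}, …, p_{i,r})` of a steep sequence. -/
noncomputable def blockSeries (r : ℕ) : MvPowerSeries (Option (Fin r)) ℤ :=
  prodSeries (fun j => if 1 ≤ j then 1 else 0) (fun _ j e => if e ≤ j then 1 else 0)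

/-- Generating function `∏_k (1 - x_k)⁻¹` of the row `(p_{0,1}, …, p_{0,r})`. -/
noncomputable def initialRowSeries (r : ℕ) : MvPowerSeries (Option (Fin r)) ℤ :=
  prodSeries (fun j => if j = 0 then 1 else 0) (fun _ _ _ => 1)

lemma sum_piProd_mul_geomSeries :
    ∑ p ∈ (univ : Finset (Fin r)).powerset, (-1) ^ p.card * piProd p * geomSeries p
      = prodOneSubX r * blockSeries r := by
  have hgeom (p : Finset (Fin r)) : piProd p * geomSeries p
      = prodSeries (fun j => if 1 ≤ j then 1 else 0) (fun k => if k ∈ p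
          then fun j e => if e = j + 1 then 1 else 0 else fun _ e => if e = 0 then 1 else 0) := by
    rw [geomSeries_eq, piProd_mul_prodSeries]
    congr 1
    funext k
    by_cases hk : k ∈ p <;> simp [hk, shift_indicator]
  simp_rw [mul_assoc, hgeom, sum_neg_one_pow_mul_prodSeries, blockSeries,
    prodOneSubX_mul_prodSeries]
  congr 1
  funext k j e
  rcases e with _ | e
  · simp
  · simp only [shift_succ]
    split_ifs <;> simp <;> omega

lemma Gseries_eq : Gseries r = prodOneSubX r * (1 - blockSeries r) := by
  rw [mul_sub, mul_one, ← sum_piProd_mul_geomSeries, prodOneSubX_eq_sum, ← sum_sub_distrib,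
    Gseries]
  simp_rw [mul_sub, mul_one]

lemma prodOneSubX_mul_initialRowSeries : prodOneSubX r * initialRowSeries r = 1 := by
  rw [initialRowSeries, prodOneSubX_mul_prodSeries, ← prodSeries_eq_one]
  congr 1
  funext k j e
  cases e <;> simp

lemma coeff_blockSeries (u : Option (Fin r) →₀ ℕ) :
    coeff u (blockSeries r) = if 1 ≤ u none ∧ ∀ k, u (some k) ≤ u none then 1 else 0 := by
  rw [blockSeries, coeff_prodSeries, Fintype.prod_boole, ite_zero_mul_ite_zero, one_mul]
  congr

abbrev SteepSeqOf (d : Option (Fin r) →₀ ℕ) : Type :=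
  SteepSeq r (d none) fun k => d (some k)

noncomputable def exponent (a : ℕ) (q : Fin r → ℕ) : Option (Fin r) →₀ ℕ :=
  Finsupp.equivFunOnFinite.symm fun o => o.elim a q

@[simp] lemma exponent_none (a : ℕ) (q : Fin r → ℕ) : exponent a q none = a := rfl

@[simp] lemma exponent_some (a : ℕ) (q : Fin r → ℕ) (k : Fin r) : exponent a q (some k) = q k := rfl

noncomputable def blockPairs (d : Option (Fin r) →₀ ℕ) :
    Finset ((Option (Fin r) →₀ ℕ) × (Option (Fin r) →₀ ℕ)) :=
  (antidiagonal d).filter fun x => 1 ≤ x.1 none ∧ ∀ k, x.1 (some k) ≤ x.1 none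

namespace SteepSeq

variable {n n' : ℕ} {m m' : Fin r → ℕ}

lemma heq_of_fields {s : SteepSeq r n m} {t : SteepSeq r n' m'} (hn : n = n') (hm : m = m')
    (hN : s.N = t.N) (hc : HEq s.c t.c) (hp : HEq s.p t.p) : HEq s t := by
  subst hn hm
  obtain ⟨N, c, _, p, _, _, _⟩ := s
  obtain ⟨N', c', _, p', _, _, _⟩ := t
  subst hN
  cases eq_of_heq hc
  cases eq_of_heq hp
  rfl

def nil (m : Fin r → ℕ) (hn : n = 0) : SteepSeq r n m where
  N := 0
  c := Fin.elim0
  c_pos := fun i => i.elim0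
  p := fun _ => m
  sum_c := by simp [hn]
  sum_p := by simp
  steep := fun i => i.elim0

def snoc (t : SteepSeq r n m) {c : ℕ} (hc : 0 < c) {q : Fin r → ℕ} (hq : ∀ k, q k ≤ c)
    (hn : n + c = n') (hm : ∀ k, m k + q k = m' k) : SteepSeq r n' m' where
  N := t.N + 1
  c := Fin.snoc t.c c
  c_pos := Fin.lastCases (by simpa using hc) fun i => by simpa using t.c_pos i
  p := Fin.snoc t.p q
  sum_c := by simp [Fin.sum_univ_castSucc, t.sum_c, hn]
  sum_p := fun k => by simp [Fin.sum_univ_castSucc, t.sum_p, hm]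
  steep := Fin.lastCases (by simpa using hq) fun i k => by
    simpa only [Fin.succ_castSucc, Fin.snoc_castSucc] using t.steep i k

end SteepSeq

lemma mem_blockPairs {d : Option (Fin r) →₀ ℕ} {x : (Option (Fin r) →₀ ℕ) × (Option (Fin r) →₀ ℕ)} :
    x ∈ blockPairs d ↔ x.1 + x.2 = d ∧ 1 ≤ x.1 none ∧ ∀ k, x.1 (some k) ≤ x.1 none := by
  rw [blockPairs, mem_filter, HasAntidiagonal.mem_antidiagonal]

lemma exponent_last_mem_blockPairs {d : Option (Fin r) →₀ ℕ} {M : ℕ} {c : Fin (M + 1) → ℕ}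
    (c_pos : ∀ i, 0 < c i) {p : Fin (M + 2) → Fin r → ℕ} (sum_c : ∑ i, c i = d none)
    (sum_p : ∀ k, ∑ i, p i k = d (some k)) (steep : ∀ i k, p i.succ k ≤ c i) :
    (exponent (c (Fin.last M)) (p (Fin.last (M + 1))),
      exponent (∑ i, Fin.init c i) fun k => ∑ i, Fin.init p i k) ∈ blockPairs d := by
  refine mem_blockPairs.2 ⟨?_, c_pos _, fun k => by simpa using steep (Fin.last M) k⟩
  ext (_ | k)
  · simp [Fin.init, ← sum_c, Fin.sum_univ_castSucc, add_comm]
  · simp [Fin.init, ← sum_p k, Fin.sum_univ_castSucc, add_comm]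

noncomputable def SteepSeq.splitLast {d : Option (Fin r) →₀ ℕ} :
    SteepSeqOf d → PLift (d none = 0) ⊕ Σ x : blockPairs d, SteepSeqOf x.1.2
  | ⟨0, _, _, _, sum_c, _, _⟩ => .inl ⟨by simpa using sum_c.symm⟩
  | ⟨M + 1, c, c_pos, p, sum_c, sum_p, steep⟩ =>
    .inr ⟨⟨_, exponent_last_mem_blockPairs c_pos sum_c sum_p steep⟩,
      { N := M
        c := Fin.init c
        c_pos := fun _ => c_pos _
        p := Fin.init p
        sum_c := rfl
        sum_p := fun _ => rfl
        steep := fun i k => steep i.castSucc k }⟩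

noncomputable def SteepSeq.glueLast {d : Option (Fin r) →₀ ℕ} :
    PLift (d none = 0) ⊕ (Σ x : blockPairs d, SteepSeqOf x.1.2) → SteepSeqOf d
  | .inl h => SteepSeq.nil _ h.down
  | .inr ⟨⟨(u, v), hx⟩, t⟩ =>
    have hx := mem_blockPairs.1 hx
    t.snoc hx.2.1 hx.2.2 (by simpa [add_comm] using DFunLike.congr_fun hx.1 none)
      fun k => by simpa [add_comm] using DFunLike.congr_fun hx.1 (some k)

noncomputable def SteepSeq.equivLastBlock (d : Option (Fin r) →₀ ℕ) :
    SteepSeqOf d ≃ PLift (d none = 0) ⊕ Σ x : blockPairs d, SteepSeqOf x.1.2 where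
  toFun := SteepSeq.splitLast
  invFun := SteepSeq.glueLast
  left_inv := by
    rintro ⟨_ | M, c, c_pos, p, sum_c, sum_p, steep⟩
    · have hp : (fun _ => fun k => d (some k)) = p := by
        funext i k
        rw [Fin.fin_one_eq_zero i, ← sum_p k, Fin.sum_univ_one]
      exact eq_of_heq (SteepSeq.heq_of_fields rfl rfl rfl (heq_of_eq (funext fun i => i.elim0))
        (heq_of_eq hp))
    · exact eq_of_heq (SteepSeq.heq_of_fields rfl rfl rfl (heq_of_eq (Fin.snoc_init_self c))
        (heq_of_eq (Fin.snoc_init_self p)))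
  right_inv := by
    rintro (h | ⟨⟨⟨u, v⟩, hx⟩, t⟩)
    · rfl
    · have hu : exponent (Fin.snoc (α := fun _ => ℕ) t.c (u none) (Fin.last t.N))
          (Fin.snoc (α := fun _ => Fin r → ℕ) t.p (fun k => u (some k)) (Fin.last (t.N + 1)))
          = u := by
        ext (_ | k) <;> simp
      have hv : (exponent (∑ i, Fin.init (α := fun _ => ℕ) (Fin.snoc t.c (u none)) i)
          fun k => ∑ i, Fin.init (α := fun _ => Fin r → ℕ) (Fin.snoc t.p fun k => u (some k)) i k)
          = v := by
        ext (_ | k) <;> simp [Fin.init_snoc, t.sum_c, t.sum_p]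
      refine congrArg Sum.inr (Sigma.ext (Subtype.ext (Prod.ext hu hv)) ?_)
      exact SteepSeq.heq_of_fields (congrArg (· none) hv)
        (congrArg (fun w k => w (some k)) hv) rfl
        (heq_of_eq (Fin.init_snoc (α := fun _ => ℕ) (u none) t.c))
        (heq_of_eq (Fin.init_snoc (α := fun _ => Fin r → ℕ) (fun k => u (some k)) t.p))

instance finite_steepSeqOf (d : Option (Fin r) →₀ ℕ) : Finite (SteepSeqOf d) := by
  suffices ∀ n (d : Option (Fin r) →₀ ℕ), d none = n → Finite (SteepSeqOf d) from this _ d rfl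
  intro n
  induction n using Nat.strong_induction_on with
  | _ n ih =>
    intro d hd
    have (x : blockPairs d) : Finite (SteepSeqOf x.1.2) := by
      obtain ⟨hsum, hpos, -⟩ := mem_blockPairs.1 x.2
      have := DFunLike.congr_fun hsum none
      rw [Finsupp.add_apply] at this
      exact ih _ (by omega) _ rfl
    exact Finite.of_equiv _ (SteepSeq.equivLastBlock d).symm

lemma card_steepSeqOf (d : Option (Fin r) →₀ ℕ) :
    (Nat.card (SteepSeqOf d) : ℤ)
      = (if d none = 0 then 1 else 0) + ∑ x ∈ blockPairs d, (Nat.card (SteepSeqOf x.2) : ℤ) := by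
  rw [Nat.card_congr (SteepSeq.equivLastBlock d), Nat.card_sum, Nat.card_sigma,
    sum_coe_sort (blockPairs d) fun x => Nat.card (SteepSeqOf x.2)]
  by_cases h : d none = 0 <;> simp [h]

lemma eq_initialRowSeries_add_blockSeries_mul (F : MvPowerSeries (Option (Fin r)) ℤ)
    (hF : ∀ d : Option (Fin r) →₀ ℕ, coeff d F = Nat.card (SteepSeqOf d)) :
    F = initialRowSeries r + blockSeries r * F := by
  ext d
  rw [map_add, hF, card_steepSeqOf, coeff_mul, initialRowSeries, coeff_prodSeries,
    prod_const_one, mul_one, blockPairs, sum_filter]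
  congr 1
  refine sum_congr rfl fun x _ => ?_
  rw [coeff_blockSeries, hF, ite_mul, one_mul, zero_mul]

/-- The generating function `F = Σ S(n, m⃗) y^n x_1^{m_1} ⋯ x_r^{m_r}` of the numbers
of steep sequences satisfies `G · F = 1` in `ℤ[[y, x_1, …, x_r]]`. -/
theorem steep_generating_function (r : ℕ) (F : MvPowerSeries (Option (Fin r)) ℤ)
    (hF : ∀ d : Option (Fin r) →₀ ℕ,
      MvPowerSeries.coeff d F
        = (Nat.card (SteepSeq r (d none) fun i => d (some i)) : ℤ)) :
    Gseries r * F = 1 := by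
  have hrec : (1 - blockSeries r) * F = initialRowSeries r := by
    rw [sub_mul, one_mul, sub_eq_iff_eq_add]
    exact eq_initialRowSeries_add_blockSeries_mul F hF
  rw [Gseries_eq, mul_assoc, hrec, prodOneSubX_mul_initialRowSeries]
end
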